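/- Let H be a Hilbert space, Θ ⊂ H a closed convex set which is polyhedric, and C(u,u*) := T(u;Θ) ∩ {u*}^⊥ the critical cone for (u,u*) in the graph of the normal cone map. Fix (ū,û*) with û* ∈ N(ū;Θ). Then C(ū,û*) − C(ū,û*) is contained in the strong sequential outer limit C_s(ū,û*) of the critical cones: for every v ∈ C(ū,û*) − C(ū,û*) there exist (uₙ,uₙ*) → (ū,û*) with uₙ* ∈ N(uₙ;Θ) and vₙ ∈ C(uₙ,uₙ*) with vₙ → v strongly. -/

import Mathlib

open RealInnerProductSpace

/-- Radial cone to a set `Θ` at `u₀`. -/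
def radialCone {H : Type*} [NormedAddCommGroup H] [InnerProductSpace ℝ H]
    (Θ : Set H) (u₀ : H) : Set H :=
  {v : H | ∃ t : ℝ, 0 < t ∧ ∃ w ∈ Θ, v = t⁻¹ • (w - u₀)}

/-- Tangent cone: closure of the radial cone. -/
def tangentCone' {H : Type*} [NormedAddCommGroup H] [InnerProductSpace ℝ H]
    (Θ : Set H) (u₀ : H) : Set H := closure (radialCone Θ u₀)

/-- Normal cone of convex analysis (empty outside the set). -/
def normalCone' {H : Type*} [NormedAddCommGroup H] [InnerProductSpace ℝ H]
    (Θ : Set H) (u₀ : H) : Set H :=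
  {u' : H | u₀ ∈ Θ ∧ ∀ u ∈ Θ, ⟪u', u - u₀⟫ ≤ 0}

/-- Orthogonal complement of a single vector. -/
def perp {H : Type*} [NormedAddCommGroup H] [InnerProductSpace ℝ H] (u' : H) : Set H :=
  {v : H | ⟪u', v⟫ = 0}

open Filter

/-!
By polyhedricity, `v₁` and `v₂` are limits of radial directions `a₁ₙ`, `a₂ₙ` orthogonal to `n₀`.
Move the base point along the second one, `uₙ = u₀ + δₙ a₂ₙ` with `δₙ → 0`: since `a₂ₙ ⊥ n₀`,
`n₀` is still normal at `uₙ`, and `a₁ₙ - a₂ₙ` is a radial direction at `uₙ` because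
`uₙ + δₙ (a₁ₙ - a₂ₙ) = u₀ + δₙ a₁ₙ ∈ Θ`. So `a₁ₙ - a₂ₙ` is critical at `(uₙ, n₀)` and tends to
`v₁ - v₂`.
-/

section

variable {H : Type*} [NormedAddCommGroup H] [InnerProductSpace ℝ H] {Θ : Set H} {u₀ : H}

lemma mem_radialCone_iff {v : H} : v ∈ radialCone Θ u₀ ↔ ∃ t : ℝ, 0 < t ∧ u₀ + t • v ∈ Θ := by
  constructor
  · rintro ⟨t, ht, w, hw, rfl⟩
    refine ⟨t, ht, ?_⟩
    rwa [smul_inv_smul₀ ht.ne', add_sub_cancel]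
  · rintro ⟨t, ht, hw⟩
    exact ⟨t, ht, u₀ + t • v, hw, by rw [add_sub_cancel_left, inv_smul_smul₀ ht.ne']⟩

lemma Convex.add_smul_mem_of_le (hcv : Convex ℝ Θ) (hu₀ : u₀ ∈ Θ) {a : H} {s t : ℝ}
    (ht : u₀ + t • a ∈ Θ) (hs : 0 ≤ s) (hst : s ≤ t) : u₀ + s • a ∈ Θ := by
  rcases hs.eq_or_lt with rfl | hs
  · simpa using hu₀
  have htpos : 0 < t := hs.trans_le hst
  have := hcv.add_smul_mem hu₀ ht ⟨div_nonneg hs.le htpos.le, (div_le_one htpos).mpr hst⟩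
  rwa [smul_smul, div_mul_cancel₀ _ htpos.ne'] at this

lemma Convex.exists_common_step_radialCone (hcv : Convex ℝ Θ) (hu₀ : u₀ ∈ Θ) {a b : H}
    (ha : a ∈ radialCone Θ u₀) (hb : b ∈ radialCone Θ u₀) {ε : ℝ} (hε : 0 < ε) :
    ∃ δ, 0 < δ ∧ δ ≤ ε ∧ u₀ + δ • a ∈ Θ ∧ u₀ + δ • b ∈ Θ := by
  obtain ⟨r, hr, hra⟩ := mem_radialCone_iff.mp ha
  obtain ⟨t, ht, htb⟩ := mem_radialCone_iff.mp hb
  have hδ : 0 < min (min r t) ε := lt_min (lt_min hr ht) hε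
  refine ⟨min (min r t) ε, hδ, min_le_right _ _, ?_, ?_⟩
  · exact hcv.add_smul_mem_of_le hu₀ hra hδ.le ((min_le_left _ _).trans (min_le_left _ _))
  · exact hcv.add_smul_mem_of_le hu₀ htb hδ.le ((min_le_left _ _).trans (min_le_right _ _))

lemma sub_mem_radialCone_add_smul {a b : H} {δ : ℝ} (hδ : 0 < δ) (ha : u₀ + δ • a ∈ Θ) :
    a - b ∈ radialCone Θ (u₀ + δ • b) :=
  mem_radialCone_iff.mpr ⟨δ, hδ, by rwa [smul_sub, add_add_sub_cancel]⟩

lemma mem_normalCone'_add {n₀ a : H} (hn₀ : n₀ ∈ normalCone' Θ u₀) (ha : u₀ + a ∈ Θ)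
    (hperp : ⟪n₀, a⟫ = 0) : n₀ ∈ normalCone' Θ (u₀ + a) :=
  ⟨ha, fun x hx => by rw [sub_add_eq_sub_sub, inner_sub_right, hperp, sub_zero]; exact hn₀.2 x hx⟩

lemma sub_mem_perp {n₀ a b : H} (ha : a ∈ perp n₀) (hb : b ∈ perp n₀) : a - b ∈ perp n₀ := by
  change ⟪n₀, a⟫ = 0 at ha
  change ⟪n₀, b⟫ = 0 at hb
  change ⟪n₀, a - b⟫ = 0
  rw [inner_sub_right, ha, hb, sub_zero]

end

theorem stmt16_general {H : Type*} [NormedAddCommGroup H] [InnerProductSpace ℝ H]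
    (Θ : Set H) (hcv : Convex ℝ Θ)
    (hpoly : ∀ u, u ∈ Θ → ∀ u' ∈ normalCone' Θ u,
      tangentCone' Θ u ∩ perp u' = closure (radialCone Θ u ∩ perp u'))
    (u₀ : H) (hu₀ : u₀ ∈ Θ) (n₀ : H) (hn₀ : n₀ ∈ normalCone' Θ u₀)
    (v : H)
    (hv : ∃ v₁ ∈ tangentCone' Θ u₀ ∩ perp n₀, ∃ v₂ ∈ tangentCone' Θ u₀ ∩ perp n₀,
      v = v₁ - v₂) :
    ∃ (u : ℕ → H) (u' : ℕ → H) (w : ℕ → H),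
      (∀ n, u' n ∈ normalCone' Θ (u n)) ∧
      Tendsto u atTop (nhds u₀) ∧ Tendsto u' atTop (nhds n₀) ∧
      (∀ n, w n ∈ tangentCone' Θ (u n) ∩ perp (u' n)) ∧
      Tendsto w atTop (nhds v) := by
  obtain ⟨v₁, hv₁, v₂, hv₂, rfl⟩ := hv
  rw [hpoly u₀ hu₀ n₀ hn₀] at hv₁ hv₂
  obtain ⟨a₁, ha₁, ha₁_lim⟩ := mem_closure_iff_seq_limit.mp hv₁
  obtain ⟨a₂, ha₂, ha₂_lim⟩ := mem_closure_iff_seq_limit.mp hv₂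
  choose δ hδ_pos hδ_le ha₁_mem ha₂_mem using fun n : ℕ =>
    hcv.exists_common_step_radialCone hu₀ (ha₁ n).1 (ha₂ n).1 (Nat.one_div_pos_of_nat (n := n))
  have hδ_lim : Tendsto δ atTop (nhds 0) :=
    squeeze_zero (fun n => (hδ_pos n).le) hδ_le tendsto_one_div_add_atTop_nhds_zero_nat
  have hnormal (n : ℕ) : n₀ ∈ normalCone' Θ (u₀ + δ n • a₂ n) :=
    mem_normalCone'_add hn₀ (ha₂_mem n) (by rw [inner_smul_right, (ha₂ n).2, mul_zero])
  refine ⟨fun n => u₀ + δ n • a₂ n, fun _ => n₀, fun n => a₁ n - a₂ n, hnormal, ?_,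
    tendsto_const_nhds, fun n => ⟨subset_closure ?_, sub_mem_perp (ha₁ n).2 (ha₂ n).2⟩,
    ha₁_lim.sub ha₂_lim⟩
  · simpa using tendsto_const_nhds.add (hδ_lim.smul ha₂_lim)
  · exact sub_mem_radialCone_add_smul (hδ_pos n) (ha₁_mem n)

theorem stmt16 {H : Type*} [NormedAddCommGroup H] [InnerProductSpace ℝ H]
    [CompleteSpace H] (Θ : Set H) (hcl : IsClosed Θ) (hcv : Convex ℝ Θ)
    (hpoly : ∀ u, u ∈ Θ → ∀ u' ∈ normalCone' Θ u,
      tangentCone' Θ u ∩ perp u' = closure (radialCone Θ u ∩ perp u'))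
    (u₀ : H) (hu₀ : u₀ ∈ Θ) (n₀ : H) (hn₀ : n₀ ∈ normalCone' Θ u₀)
    (v : H)
    (hv : ∃ v₁ ∈ tangentCone' Θ u₀ ∩ perp n₀, ∃ v₂ ∈ tangentCone' Θ u₀ ∩ perp n₀,
      v = v₁ - v₂) :
    ∃ (u : ℕ → H) (u' : ℕ → H) (w : ℕ → H),
      (∀ n, u' n ∈ normalCone' Θ (u n)) ∧
      Tendsto u atTop (nhds u₀) ∧ Tendsto u' atTop (nhds n₀) ∧
      (∀ n, w n ∈ tangentCone' Θ (u n) ∩ perp (u' n)) ∧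
      Tendsto w atTop (nhds v) :=
  stmt16_general Θ hcv hpoly u₀ hu₀ n₀ hn₀ v hv
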